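/- Let T = ℂ² with standard basis e₁, e₂, let d ≥ 0, and let V_d = T ⊗ ℂ[z]/(z^{d+1}) be the vector representation of the truncated current Lie algebra 𝔤_d = 𝔰𝔩₂ ⊗ ℂ[z]/(z^{d+1}). For x ∈ V_d with x ≠ 0, write x = x_n z^n + ... + x_d z^d with x_n ≠ 0 (so n = min.deg x). Then there exists ξ ∈ 𝔤_d with ξ.x = 0 whose constant coefficient ξ₀ ∈ 𝔰𝔩₂ is nonzero. -/

import Mathlib

/-!
Since `z` is nilpotent, a nonzero `x` can be written `x = zⁿ • y` with `y` not divisible by `z`,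
i.e. with nonzero constant term `y(0) ∈ ℂ²`. With `y^⊥ = (y₁, -y₀)`, the rank-one matrix
`ξ = y ⊗ y^⊥` has trace `⟨y, y^⊥⟩ = 0` and satisfies `ξ y = ⟨y^⊥, y⟩ y = 0`, hence `ξ x = 0`; its
off-diagonal entries `-y₀²` and `y₁²` cannot both have vanishing constant term.
-/

open Polynomial Matrix

theorem exists_eq_pow_smul_forall_ne_smul {R M : Type*} [Semiring R] [AddCommMonoid M]
    [Module R M] {t : R} (ht : IsNilpotent t) {x : M} (hx : x ≠ 0) :
    ∃ (n : ℕ) (y : M), x = t ^ n • y ∧ ∀ y' : M, y ≠ t • y' := by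
  classical
  obtain ⟨k, hk⟩ := ht
  have hbound : ∃ n, ∀ y : M, x ≠ t ^ (n + 1) • y :=
    ⟨k, fun y h => hx (by rw [h, pow_succ, hk, zero_mul, zero_smul])⟩
  have hdiv : ∃ y : M, x = t ^ Nat.find hbound • y := by
    cases hm : Nat.find hbound with
    | zero => exact ⟨x, by rw [pow_zero, one_smul]⟩
    | succ m =>
      by_contra! h
      exact Nat.find_min hbound (hm ▸ Nat.lt_succ_self m) h
  obtain ⟨y, hy⟩ := hdiv
  refine ⟨_, y, hy, fun y' hy' => Nat.find_spec hbound y' ?_⟩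
  rwa [hy', smul_smul, ← pow_succ] at hy

section Perp

variable {R : Type*} [CommRing R]

def perp (v : Fin 2 → R) : Fin 2 → R := ![v 1, -v 0]

theorem dotProduct_perp_self (v : Fin 2 → R) : v ⬝ᵥ perp v = 0 := by
  simp [perp, dotProduct, Fin.sum_univ_two, mul_comm]

theorem perp_dotProduct_self (v : Fin 2 → R) : perp v ⬝ᵥ v = 0 := by
  rw [dotProduct_comm, dotProduct_perp_self]

theorem vecMulVec_perp_mulVec_self (v : Fin 2 → R) : vecMulVec v (perp v) *ᵥ v = 0 := by
  rw [vecMulVec_mulVec, perp_dotProduct_self, MulOpposite.op_zero, zero_smul]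

end Perp

section TruncatedPolynomial

variable {K : Type*} [CommRing K] (d : ℕ)

local notation "𝓡" => K[X] ⧸ Ideal.span {(X : K[X]) ^ (d + 1)}
local notation "𝔷" => Ideal.Quotient.mk (Ideal.span {(X : K[X]) ^ (d + 1)}) (X : K[X])

theorem isNilpotent_mk_X : IsNilpotent 𝔷 :=
  ⟨d + 1, by rw [← map_pow, Ideal.Quotient.eq_zero_iff_mem]; exact Ideal.mem_span_singleton_self _⟩

noncomputable def truncConstCoeff : 𝓡 →+* K :=
  Ideal.Quotient.lift _ (evalRingHom 0) fun p hp => by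
    obtain ⟨q, rfl⟩ := Ideal.mem_span_singleton'.mp hp
    simp [eval_mul, zero_pow (Nat.succ_ne_zero d)]

@[simp]
theorem truncConstCoeff_mk (p : K[X]) :
    truncConstCoeff d (Ideal.Quotient.mk _ p) = p.eval 0 :=
  Ideal.Quotient.lift_mk _ _ _

theorem exists_eq_mk_X_mul_of_truncConstCoeff_eq_zero {r : 𝓡} (hr : truncConstCoeff d r = 0) :
    ∃ s : 𝓡, r = 𝔷 * s := by
  obtain ⟨p, rfl⟩ := Ideal.Quotient.mk_surjective r
  rw [truncConstCoeff_mk, ← coeff_zero_eq_eval_zero, ← X_dvd_iff] at hr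
  obtain ⟨q, rfl⟩ := hr
  exact ⟨Ideal.Quotient.mk _ q, map_mul _ _ _⟩

theorem exists_truncConstCoeff_ne_zero {ι : Type*} {y : ι → 𝓡}
    (hy : ∀ y', y ≠ 𝔷 • y') : ∃ i, truncConstCoeff d (y i) ≠ 0 := by
  by_contra! h
  choose y' hy' using fun i => exists_eq_mk_X_mul_of_truncConstCoeff_eq_zero d (h i)
  exact hy y' (funext hy')

theorem truncConstCoeff_eq_zero_of_eq_mk_X_smul {ι κ : Type*} {A B : Matrix ι κ 𝓡}
    (h : A = 𝔷 • B) (i : ι) (j : κ) : truncConstCoeff d (A i j) = 0 := by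
  simp [h]

end TruncatedPolynomial

theorem stmt3 (d : ℕ) (x : Fin 2 → Polynomial ℂ ⧸ Ideal.span {(X : Polynomial ℂ) ^ (d + 1)})
    (hx : x ≠ 0) :
    ∃ ξ : Matrix (Fin 2) (Fin 2) (Polynomial ℂ ⧸ Ideal.span {(X : Polynomial ℂ) ^ (d + 1)}),
      ξ.trace = 0 ∧ ξ.mulVec x = 0 ∧
      ¬∃ B : Matrix (Fin 2) (Fin 2) (Polynomial ℂ ⧸ Ideal.span {(X : Polynomial ℂ) ^ (d + 1)}),
        ξ = (Ideal.Quotient.mk (Ideal.span {(X : Polynomial ℂ) ^ (d + 1)}) X) • B := by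
  obtain ⟨n, y, rfl, hy⟩ := exists_eq_pow_smul_forall_ne_smul (isNilpotent_mk_X (K := ℂ) d) hx
  refine ⟨vecMulVec y (perp y), ?_, ?_, ?_⟩
  · rw [trace_vecMulVec, dotProduct_perp_self]
  · rw [mulVec_smul, vecMulVec_perp_mulVec_self, smul_zero]
  · rintro ⟨B, hB⟩
    obtain ⟨i, hi⟩ := exists_truncConstCoeff_ne_zero d hy
    have h01 := truncConstCoeff_eq_zero_of_eq_mk_X_smul d hB 0 1
    have h10 := truncConstCoeff_eq_zero_of_eq_mk_X_smul d hB 1 0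
    fin_cases i <;> simp_all [perp]
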